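/- Let P be a weighted CSMA chain for (G,W) with stationary distribution π, and let P* be the adjoint of P with respect to π. Then the operator norm of P* restricted to mean-zero functions is strictly less than 1: for every function v : I(G) → ℝ with Σ_{σ∈I(G)} π_σ v_σ = 0, one has ‖P* v‖_{2,π} ≤ (1 − 2^{-(24n·2^n + 12n + 2)} · W_max^{-8n}) · ‖v‖_{2,π}. -/

import Mathlib

/-- An independent set of a graph, as a `Finset` of vertices. -/
def IsIndep {V : Type*} (G : SimpleGraph V) (s : Finset V) : Prop :=
  ∀ i ∈ s, ∀ j ∈ s, ¬ G.Adj i j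

instance {V : Type*} (G : SimpleGraph V) [DecidableRel G.Adj] :
    DecidablePred (IsIndep G) := fun s =>
  inferInstanceAs (Decidable (∀ i ∈ s, ∀ j ∈ s, ¬ G.Adj i j))

instance {V : Type*} (G : SimpleGraph V) :
    Nonempty {s : Finset V // IsIndep G s} :=
  ⟨⟨∅, fun i hi => absurd hi (Finset.notMem_empty i)⟩⟩

/-!
Every row of a weighted CSMA chain puts mass at least `β = 2^{-2n} W_max^{-n}` on the empty
set, so the adjoint satisfies `P*(∅, σ') ≥ β π(σ')` and the two-step chain `P P*` is minorized
by `β² π`. Since `‖P* v‖²_π = ⟨v, P P* v⟩_π`, writing `P P* = β² 𝟙π + N` with `N ≥ 0` of row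
sums `1 - β²` and `π N = (1 - β²) π` gives `‖P* v‖²_π ≤ (1 - β²) ‖v‖²_π` for mean-zero `v`
(by `2 ab ≤ a² + b²`). The stated `δ` has `2δ ≤ β²`, and `√(1 - 2δ) ≤ 1 - δ`.
-/

open Finset Matrix

namespace Matrix

variable {ι : Type*} [Fintype ι] {π : ι → ℝ}

/-- The adjoint `P*` of `P` in `ℓ²(π)`. -/
noncomputable def timeReversal (π : ι → ℝ) (P : Matrix ι ι ℝ) : Matrix ι ι ℝ :=
  of fun σ σ' => π σ' * P σ' σ / π σ

theorem sum_mul_timeReversal_mulVec_mul (hπ : ∀ σ, π σ ≠ 0) (P : Matrix ι ι ℝ)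
    (f g : ι → ℝ) :
    ∑ σ, π σ * (timeReversal π P *ᵥ f) σ * g σ
      = ∑ σ, π σ * f σ * (P *ᵥ g) σ := by
  simp only [timeReversal, mulVec, dotProduct, of_apply, mul_sum, sum_mul]
  rw [sum_comm]
  refine sum_congr rfl fun σ _ => sum_congr rfl fun σ' _ => ?_
  field_simp [hπ σ']

theorem sum_mul_timeReversal_mulVec_sq (hπ : ∀ σ, π σ ≠ 0) (P : Matrix ι ι ℝ)
    (v : ι → ℝ) :
    ∑ σ, π σ * (timeReversal π P *ᵥ v) σ ^ 2
      = ∑ σ, π σ * v σ * ((P * timeReversal π P) *ᵥ v) σ := by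
  simp only [sq, ← mul_assoc, sum_mul_timeReversal_mulVec_mul hπ, mulVec_mulVec]

theorem vecMul_timeReversal (hπ : ∀ σ, π σ ≠ 0) {P : Matrix ι ι ℝ}
    (hP : ∀ σ, ∑ σ', P σ σ' = 1) : π ᵥ* timeReversal π P = π := by
  ext σ'
  simp only [vecMul, dotProduct, timeReversal, of_apply]
  calc ∑ σ, π σ * (π σ' * P σ' σ / π σ) = π σ' * ∑ σ, P σ' σ := by
        rw [mul_sum]
        exact sum_congr rfl fun σ _ => by field_simp [hπ σ]
    _ = π σ' := by rw [hP, mul_one]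

theorem timeReversal_mem_rowStochastic [DecidableEq ι] (hπ : ∀ σ, 0 < π σ)
    {P : Matrix ι ι ℝ} (hP : ∀ σ σ', 0 ≤ P σ σ') (hπP : π ᵥ* P = π) :
    timeReversal π P ∈ rowStochastic ℝ ι := by
  refine mem_rowStochastic_iff_sum.2 ⟨fun σ σ' => ?_, fun σ => ?_⟩
  · exact div_nonneg (mul_nonneg (hπ σ').le (hP σ' σ)) (hπ σ).le
  · simp only [timeReversal, of_apply, ← sum_div]
    have hσ : ∑ σ', π σ' * P σ' σ = π σ := congrFun hπP σ
    rw [hσ, div_self (hπ σ).ne']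

theorem sum_mul_mulVec_le_of_sum_row_of_vecMul (hπ : ∀ σ, 0 ≤ π σ) {N : Matrix ι ι ℝ}
    (hN : ∀ σ σ', 0 ≤ N σ σ') {r : ℝ} (hrow : ∀ σ, ∑ σ', N σ σ' = r)
    (hcol : π ᵥ* N = r • π) (v : ι → ℝ) :
    ∑ σ, π σ * v σ * (N *ᵥ v) σ ≤ r * ∑ σ, π σ * v σ ^ 2 := by
  have hrow_sq : ∑ σ, ∑ σ', π σ * N σ σ' * v σ ^ 2 = r * ∑ σ, π σ * v σ ^ 2 := by
    rw [mul_sum]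
    refine sum_congr rfl fun σ _ => ?_
    rw [← sum_mul, ← mul_sum, hrow]
    ring
  have hcol_sq : ∑ σ, ∑ σ', π σ * N σ σ' * v σ' ^ 2 = r * ∑ σ, π σ * v σ ^ 2 := by
    rw [sum_comm, mul_sum]
    refine sum_congr rfl fun σ' _ => ?_
    rw [← sum_mul, show ∑ σ, π σ * N σ σ' = r * π σ' from congrFun hcol σ']
    ring
  calc ∑ σ, π σ * v σ * (N *ᵥ v) σ
        = ∑ σ, ∑ σ', π σ * N σ σ' * (v σ * v σ') := by
        simp only [mulVec, dotProduct, mul_sum]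
        exact sum_congr rfl fun σ _ => sum_congr rfl fun σ' _ => by ring
    _ ≤ ∑ σ, ∑ σ', π σ * N σ σ' * ((v σ ^ 2 + v σ' ^ 2) / 2) := by
        gcongr with σ _ σ' _
        · exact mul_nonneg (hπ σ) (hN σ σ')
        · linarith [two_mul_le_add_sq (v σ) (v σ')]
    _ = (∑ σ, ∑ σ', π σ * N σ σ' * v σ ^ 2
          + ∑ σ, ∑ σ', π σ * N σ σ' * v σ' ^ 2) / 2 := by
        rw [← sum_add_distrib, sum_div]
        refine sum_congr rfl fun σ _ => ?_
        rw [← sum_add_distrib, sum_div]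
        exact sum_congr rfl fun σ' _ => by ring
    _ = r * ∑ σ, π σ * v σ ^ 2 := by
        rw [hrow_sq, hcol_sq]
        ring

theorem sum_mul_mulVec_le_of_minorization (hπ : ∀ σ, 0 ≤ π σ) (hπ1 : ∑ σ, π σ = 1)
    {M : Matrix ι ι ℝ} (hrow : ∀ σ, ∑ σ', M σ σ' = 1) (hπM : π ᵥ* M = π) {α : ℝ}
    (hα : ∀ σ σ', α * π σ' ≤ M σ σ') (v : ι → ℝ) (hv : ∑ σ, π σ * v σ = 0) :
    ∑ σ, π σ * v σ * (M *ᵥ v) σ ≤ (1 - α) * ∑ σ, π σ * v σ ^ 2 := by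
  have hNv : (of fun σ σ' => M σ σ' - α * π σ') *ᵥ v = M *ᵥ v := by
    ext σ
    simp only [mulVec, dotProduct, of_apply, sub_mul, sum_sub_distrib, mul_assoc, ← mul_sum,
      hv, mul_zero, sub_zero]
  rw [← hNv]
  refine sum_mul_mulVec_le_of_sum_row_of_vecMul hπ (fun σ σ' => sub_nonneg.2 (hα σ σ'))
    (fun σ => ?_) ?_ v
  · simp only [sum_sub_distrib, hrow, ← mul_sum, hπ1, mul_one]
  · ext σ'
    have hσ' : ∑ σ, π σ * M σ σ' = π σ' := congrFun hπM σ'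
    simp only [vecMul, dotProduct, mul_sub, sum_sub_distrib, hσ', ← sum_mul, hπ1,
      Pi.smul_apply, smul_eq_mul]
    ring

theorem sq_mul_le_mul_timeReversal_apply (hπ : ∀ σ, 0 < π σ) {e : ι} (hπe : π e ≤ 1)
    {P : Matrix ι ι ℝ} (hP : ∀ σ σ', 0 ≤ P σ σ') {β : ℝ} (hβ0 : 0 ≤ β)
    (hβ : ∀ σ, β ≤ P σ e) (σ σ' : ι) :
    β ^ 2 * π σ' ≤ (P * timeReversal π P) σ σ' := by
  have hPe : β * π σ' ≤ timeReversal π P e σ' :=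
    calc β * π σ' ≤ π σ' * P σ' e := by
          rw [mul_comm]; exact mul_le_mul_of_nonneg_left (hβ σ') (hπ σ').le
      _ ≤ π σ' * P σ' e / π e := le_div_self (mul_nonneg (hπ σ').le (hP σ' e)) (hπ e) hπe
  have hnonneg (τ : ι) : 0 ≤ P σ τ * timeReversal π P τ σ' :=
    mul_nonneg (hP σ τ) (div_nonneg (mul_nonneg (hπ σ').le (hP σ' τ)) (hπ τ).le)
  calc β ^ 2 * π σ' = β * (β * π σ') := by ring
    _ ≤ P σ e * timeReversal π P e σ' :=
        mul_le_mul (hβ σ) hPe (mul_nonneg hβ0 (hπ σ').le) (hβ0.trans (hβ σ))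
    _ ≤ (P * timeReversal π P) σ σ' :=
        mul_apply (M := P) ▸ single_le_sum (fun τ _ => hnonneg τ) (mem_univ e)

end Matrix

theorem Finset.inv_pow_le_prod_inv {α : Type*} {s : Finset α} {W : α → ℝ} {Wmax : ℝ}
    {m : ℕ} (hW : ∀ i ∈ s, 0 < W i) (hWle : ∀ i ∈ s, W i ≤ Wmax) (hWmax : 1 ≤ Wmax)
    (hm : #s ≤ m) :
    (Wmax ^ m)⁻¹ ≤ ∏ i ∈ s, (W i)⁻¹ := by
  rw [prod_inv_distrib]
  refine inv_anti₀ (prod_pos hW) ?_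
  calc ∏ i ∈ s, W i ≤ ∏ _i ∈ s, Wmax := prod_le_prod (fun i hi => (hW i hi).le) hWle
    _ = Wmax ^ #s := prod_const Wmax
    _ ≤ Wmax ^ m := pow_le_pow_right₀ hWmax hm

theorem isIndep_empty {V : Type*} (G : SimpleGraph V) : IsIndep G ∅ := by
  simp [IsIndep]

section CSMA

variable {V : Type*} [Fintype V] [DecidableEq V] {G : SimpleGraph V} [DecidableRel G.Adj]
  {W : V → ℝ}
  {P : {s : Finset V // IsIndep G s} → {s : Finset V // IsIndep G s} → ℝ}
  {σ : {s : Finset V // IsIndep G s}} {c : ℝ} {p : {s : Finset V // IsIndep G s} → ℝ}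

theorem inv_two_pow_card_le_csma_const (hW : ∀ i, 1 ≤ W i)
    (hPpos : ∀ σ', 0 < P σ σ' ↔ IsIndep G (σ.1 ∪ σ'.1)) (hProw : ∑ σ', P σ σ' = 1)
    (hc : 0 < c) (hp : ∀ σ', p σ' ≤ 1)
    (hform : ∀ σ', IsIndep G (σ.1 ∪ σ'.1) →
      P σ σ' = c * (∏ i ∈ σ.1 \ σ'.1, (W i)⁻¹) * p σ') :
    ((2 : ℝ) ^ Fintype.card V)⁻¹ ≤ c := by
  have hinv_nonneg (i : V) : 0 ≤ (W i)⁻¹ := inv_nonneg.2 (zero_le_one.trans (hW i))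
  have hprod_nonneg (s : Finset V) : 0 ≤ ∏ i ∈ s, (W i)⁻¹ :=
    prod_nonneg fun i _ => hinv_nonneg i
  have hle (σ' : {s : Finset V // IsIndep G s}) : P σ σ' ≤ c := by
    by_cases hσ' : IsIndep G (σ.1 ∪ σ'.1)
    · have hprod : ∏ i ∈ σ.1 \ σ'.1, (W i)⁻¹ ≤ 1 :=
        prod_le_one (fun i _ => hinv_nonneg i) (fun i _ => inv_le_one_of_one_le₀ (hW i))
      rw [hform σ' hσ']
      calc c * (∏ i ∈ σ.1 \ σ'.1, (W i)⁻¹) * p σ'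
          ≤ c * ∏ i ∈ σ.1 \ σ'.1, (W i)⁻¹ :=
            mul_le_of_le_one_right (mul_nonneg hc.le (hprod_nonneg _)) (hp σ')
        _ ≤ c := mul_le_of_le_one_right hc.le hprod
    · exact (not_lt.1 (mt (hPpos σ').1 hσ')).trans hc.le
  have hcard : (Fintype.card {s : Finset V // IsIndep G s} : ℝ) ≤ 2 ^ Fintype.card V := by
    exact_mod_cast (Fintype.card_subtype_le _).trans_eq Fintype.card_finset
  rw [inv_le_iff_one_le_mul₀' (by positivity)]
  calc (1 : ℝ) = ∑ σ', P σ σ' := hProw.symm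
    _ ≤ Fintype.card {s : Finset V // IsIndep G s} * c := by
        simpa using sum_le_card_nsmul univ (P σ) c fun σ' _ => hle σ'
    _ ≤ 2 ^ Fintype.card V * c := by gcongr

theorem le_csma_apply_empty {Wmax : ℝ} (hW : ∀ i, 1 ≤ W i) (hWle : ∀ i, W i ≤ Wmax)
    (hWmax : 1 ≤ Wmax) (hPpos : ∀ σ', 0 < P σ σ' ↔ IsIndep G (σ.1 ∪ σ'.1))
    (hProw : ∑ σ', P σ σ' = 1) (hc : 0 < c)
    (hp : ∀ σ', p σ' ∈ Set.Icc (((2 : ℝ) ^ (Fintype.card V))⁻¹) 1)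
    (hform : ∀ σ', IsIndep G (σ.1 ∪ σ'.1) →
      P σ σ' = c * (∏ i ∈ σ.1 \ σ'.1, (W i)⁻¹) * p σ') :
    (((2 : ℝ) ^ Fintype.card V) ^ 2 * Wmax ^ Fintype.card V)⁻¹
      ≤ P σ ⟨∅, isIndep_empty G⟩ := by
  have hc' := inv_two_pow_card_le_csma_const hW hPpos hProw hc (fun σ' => (hp σ').2) hform
  have hprod : (Wmax ^ Fintype.card V)⁻¹ ≤ ∏ i ∈ σ.1 \ ∅, (W i)⁻¹ :=
    inv_pow_le_prod_inv (fun i _ => zero_lt_one.trans_le (hW i)) (fun i _ => hWle i) hWmax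
      (card_le_univ _)
  rw [hform _ (by simpa using σ.2)]
  calc (((2 : ℝ) ^ Fintype.card V) ^ 2 * Wmax ^ Fintype.card V)⁻¹
      = ((2 : ℝ) ^ Fintype.card V)⁻¹ * (Wmax ^ Fintype.card V)⁻¹
          * ((2 : ℝ) ^ Fintype.card V)⁻¹ := by
        rw [sq, mul_inv, mul_inv]; ring
    _ ≤ c * (∏ i ∈ σ.1 \ ∅, (W i)⁻¹) * p ⟨∅, isIndep_empty G⟩ := by
        gcongr
        · exact mul_nonneg hc.le
            ((inv_nonneg.2 (pow_nonneg (zero_le_one.trans hWmax) _)).trans hprod)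
        · exact (hp _).1

end CSMA

theorem sqrt_le_one_sub_mul_sqrt {x a δ : ℝ} (hx : x ≤ (1 - 2 * δ) * a) (ha : 0 ≤ a)
    (hδ : δ ≤ 1) : √x ≤ (1 - δ) * √a := by
  rw [Real.sqrt_le_left (mul_nonneg (sub_nonneg.2 hδ) (Real.sqrt_nonneg a)), mul_pow,
    Real.sq_sqrt ha]
  nlinarith [mul_nonneg (sq_nonneg δ) ha]

theorem two_mul_inv_le_sq_inv {w : ℝ} (hw : 1 ≤ w) (n : ℕ) :
    2 * ((2 : ℝ) ^ (24 * n * 2 ^ n + 12 * n + 2) * w ^ (8 * n))⁻¹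
      ≤ (((2 : ℝ) ^ n) ^ 2 * w ^ n)⁻¹ ^ 2 := by
  have hw0 : 0 < w := zero_lt_one.trans_le hw
  calc 2 * ((2 : ℝ) ^ (24 * n * 2 ^ n + 12 * n + 2) * w ^ (8 * n))⁻¹
      ≤ 2 * ((2 : ℝ) ^ (4 * n + 1) * w ^ (2 * n))⁻¹ := by
        gcongr <;> first | omega | norm_num
    _ = (((2 : ℝ) ^ n) ^ 2 * w ^ n)⁻¹ ^ 2 := by
        field_simp
        ring

/-- For a weighted CSMA chain `P` for `(G, W)` with stationary
distribution `π` and adjoint `P*`, the operator norm of `P*` on mean-zero functions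
is strictly less than 1: for every `v` with `Σ_σ π_σ v_σ = 0`,
`‖P* v‖_{2,π} ≤ (1 - 2^{-(24n·2^n + 12n + 2)}·W_max^{-8n})·‖v‖_{2,π}`. -/
theorem csma_Pstar_operator_norm_bound
    {V : Type*} [Fintype V] [DecidableEq V] [Nonempty V]
    (G : SimpleGraph V) [DecidableRel G.Adj]
    (W : V → ℝ) (hW : ∀ i, 1 ≤ W i)
    (P : {s : Finset V // IsIndep G s} → {s : Finset V // IsIndep G s} → ℝ)
    (hP0 : ∀ σ σ', 0 ≤ P σ σ')
    (hProw : ∀ σ, ∑ σ', P σ σ' = 1)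
    (hPpos : ∀ σ σ', 0 < P σ σ' ↔ IsIndep G (σ.1 ∪ σ'.1))
    (hPform : ∀ σ, ∃ c : ℝ, 0 < c ∧ ∃ p : {s : Finset V // IsIndep G s} → ℝ,
      (∀ σ', p σ' ∈ Set.Icc (((2 : ℝ) ^ (Fintype.card V))⁻¹) 1) ∧
      ∀ σ', IsIndep G (σ.1 ∪ σ'.1) →
        P σ σ' = c * (∏ i ∈ σ.1 \ σ'.1, (W i)⁻¹) * p σ')
    (π : {s : Finset V // IsIndep G s} → ℝ)
    (hπ0 : ∀ σ, 0 < π σ) (hπsum : ∑ σ, π σ = 1)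
    (hπstat : ∀ σ', ∑ σ, π σ * P σ σ' = π σ')
    (Wmax : ℝ) (hWmax : Wmax = Finset.univ.sup' Finset.univ_nonempty W)
    (Pstar : {s : Finset V // IsIndep G s} → {s : Finset V // IsIndep G s} → ℝ)
    (hPstar : ∀ σ σ', Pstar σ σ' = π σ' * P σ' σ / π σ) :
    ∀ v : {s : Finset V // IsIndep G s} → ℝ, (∑ σ, π σ * v σ) = 0 →
      Real.sqrt (∑ σ, π σ * (∑ σ', Pstar σ σ' * v σ') ^ 2)
        ≤ (1 - ((2 : ℝ) ^ (24 * Fintype.card V * 2 ^ (Fintype.card V)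
              + 12 * Fintype.card V + 2)
            * Wmax ^ (8 * Fintype.card V))⁻¹)
          * Real.sqrt (∑ σ, π σ * (v σ) ^ 2) := by
  intro v hv
  obtain ⟨i₀⟩ := ‹Nonempty V›
  have hWle (i : V) : W i ≤ Wmax := hWmax ▸ le_sup' W (mem_univ i)
  have hWmax1 : 1 ≤ Wmax := (hW i₀).trans (hWle i₀)
  obtain rfl : Pstar = timeReversal π (of P) := funext₂ hPstar
  have hP : of P ∈ rowStochastic ℝ _ := mem_rowStochastic_iff_sum.2 ⟨hP0, hProw⟩
  have hπP : π ᵥ* of P = π := funext hπstat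
  have hK : of P * timeReversal π (of P) ∈ rowStochastic ℝ _ :=
    mul_mem hP (timeReversal_mem_rowStochastic hπ0 hP0 hπP)
  have hπK : π ᵥ* (of P * timeReversal π (of P)) = π := by
    rw [← vecMul_vecMul, hπP, vecMul_timeReversal (P := of P) (fun σ => (hπ0 σ).ne') hProw]
  set β : ℝ := (((2 : ℝ) ^ Fintype.card V) ^ 2 * Wmax ^ Fintype.card V)⁻¹
  set δ : ℝ := ((2 : ℝ) ^ (24 * Fintype.card V * 2 ^ (Fintype.card V)
    + 12 * Fintype.card V + 2) * Wmax ^ (8 * Fintype.card V))⁻¹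
  have hdoeblin (σ : {s : Finset V // IsIndep G s}) : β ≤ P σ ⟨∅, isIndep_empty G⟩ := by
    obtain ⟨c, hc, p, hp, hform⟩ := hPform σ
    exact le_csma_apply_empty hW hWle hWmax1 (hPpos σ) (hProw σ) hc hp hform
  have hπe : π ⟨∅, isIndep_empty G⟩ ≤ 1 :=
    hπsum ▸ single_le_sum (fun σ _ => (hπ0 σ).le) (mem_univ _)
  have hmin (σ σ' : {s : Finset V // IsIndep G s}) :
      2 * δ * π σ' ≤ (of P * timeReversal π (of P)) σ σ' :=
    (mul_le_mul_of_nonneg_right (two_mul_inv_le_sq_inv hWmax1 (Fintype.card V)) (hπ0 σ').le).trans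
      (sq_mul_le_mul_timeReversal_apply hπ0 hπe hP0 (by positivity) hdoeblin σ σ')
  have hgap : ∑ σ, π σ * (timeReversal π (of P) *ᵥ v) σ ^ 2
      ≤ (1 - 2 * δ) * ∑ σ, π σ * v σ ^ 2 := by
    rw [sum_mul_timeReversal_mulVec_sq (fun σ => (hπ0 σ).ne')]
    exact sum_mul_mulVec_le_of_minorization (fun σ => (hπ0 σ).le) hπsum
      (sum_row_of_mem_rowStochastic hK) hπK hmin v hv
  exact sqrt_le_one_sub_mul_sqrt hgap (sum_nonneg fun σ _ => mul_nonneg (hπ0 σ).le (sq_nonneg _))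
    (inv_le_one_of_one_le₀ (one_le_mul_of_one_le_of_one_le (one_le_pow₀ one_le_two)
      (one_le_pow₀ hWmax1)))
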